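/- Let k ≥ 1 be a natural number, σ > 0, Δ ≥ 0, α > 1, and let a, b ∈ ℝ^k with ‖a − b‖ ≤ Δ (Euclidean norm). Define the Gaussian density q_{v,σ}(x) = (2πσ²)^{−k/2} exp(−‖x−v‖²/(2σ²)) on ℝ^k. Then (α−1)⁻¹ · log( ∫_{ℝ^k} q_{a,σ}(x)^α · q_{b,σ}(x)^{1−α} dx ) ≤ αΔ²/(2σ²). -/

import Mathlib

/-!
The integrand `q_a ^ α * q_b ^ (1 - α)` is, pointwise, the constant
`exp (α (α - 1) ‖a - b‖² / (2σ²))` times the Gaussian density centred at `b + α • (a - b)`: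
completing the square in the exponent is the identity
`α ‖u - d‖² + (1 - α) ‖u‖² = ‖u - α • d‖² + α (1 - α) ‖d‖²`.
Since a Gaussian density integrates to one, the Rényi divergence equals `α ‖a - b‖² / (2σ²)`
exactly, which is at most `α Δ² / (2σ²)`.
-/

/-- The density of the multivariate Gaussian `N(v, σ²I)` on `ℝ^k`
(with the Euclidean norm), with respect to the Lebesgue measure. -/
noncomputable def multiGaussianDensity (k : ℕ) (σ : ℝ) (v x : EuclideanSpace ℝ (Fin k)) : ℝ :=
  (2 * Real.pi * σ ^ 2) ^ (-(k : ℝ) / 2) * Real.exp (-‖x - v‖ ^ 2 / (2 * σ ^ 2))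

open Real MeasureTheory

theorem mul_norm_sub_sq_add_one_sub_mul_norm_sq {E : Type*} [NormedAddCommGroup E]
    [InnerProductSpace ℝ E] (α : ℝ) (u d : E) :
    α * ‖u - d‖ ^ 2 + (1 - α) * ‖u‖ ^ 2 = ‖u - α • d‖ ^ 2 + α * (1 - α) * ‖d‖ ^ 2 := by
  rw [norm_sub_sq_real, norm_sub_sq_real, real_inner_smul_right, norm_smul, mul_pow,
    norm_eq_abs, sq_abs]
  ring

theorem integral_exp_neg_norm_sub_sq_div {V : Type*} [NormedAddCommGroup V]
    [InnerProductSpace ℝ V] [FiniteDimensional ℝ V] [MeasurableSpace V] [BorelSpace V]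
    {σ : ℝ} (hσ : σ ≠ 0) (c : V) :
    ∫ x : V, exp (-‖x - c‖ ^ 2 / (2 * σ ^ 2))
      = (2 * π * σ ^ 2) ^ (Module.finrank ℝ V / 2 : ℝ) := by
  calc ∫ x : V, exp (-‖x - c‖ ^ 2 / (2 * σ ^ 2))
      = ∫ x : V, exp (-(1 / (2 * σ ^ 2)) * ‖x - c‖ ^ 2) := by
        congr with x
        ring_nf
    _ = ∫ x : V, exp (-(1 / (2 * σ ^ 2)) * ‖x‖ ^ 2) :=
        integral_sub_right_eq_self (fun x : V ↦ exp (-(1 / (2 * σ ^ 2)) * ‖x‖ ^ 2)) c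
    _ = (2 * π * σ ^ 2) ^ (Module.finrank ℝ V / 2 : ℝ) := by
        rw [GaussianFourier.integral_rexp_neg_mul_sq_norm (by positivity), one_div, div_inv_eq_mul]
        ring_nf

section

variable {k : ℕ} {σ : ℝ}

theorem integral_multiGaussianDensity (hσ : σ ≠ 0) (v : EuclideanSpace ℝ (Fin k)) :
    ∫ x, multiGaussianDensity k σ v x = 1 := by
  have hbase : 0 < 2 * π * σ ^ 2 := by positivity
  unfold multiGaussianDensity
  rw [integral_const_mul, integral_exp_neg_norm_sub_sq_div hσ, finrank_euclideanSpace_fin,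
    ← rpow_add hbase, neg_div, neg_add_cancel, rpow_zero]

theorem multiGaussianDensity_rpow_mul_rpow (hσ : σ ≠ 0) (α : ℝ)
    (a b x : EuclideanSpace ℝ (Fin k)) :
    multiGaussianDensity k σ a x ^ α * multiGaussianDensity k σ b x ^ (1 - α)
      = exp (α * (α - 1) * ‖a - b‖ ^ 2 / (2 * σ ^ 2))
          * multiGaussianDensity k σ (b + α • (a - b)) x := by
  have hC : 0 < (2 * π * σ ^ 2) ^ (-(k : ℝ) / 2) := by positivity
  have hexponent : α * ‖x - a‖ ^ 2 + (1 - α) * ‖x - b‖ ^ 2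
      = ‖x - (b + α • (a - b))‖ ^ 2 + α * (1 - α) * ‖a - b‖ ^ 2 := by
    rw [show x - a = (x - b) - (a - b) by abel, show x - (b + α • (a - b)) = (x - b) - α • (a - b)
      by abel]
    exact mul_norm_sub_sq_add_one_sub_mul_norm_sq α (x - b) (a - b)
  simp only [multiGaussianDensity]
  rw [mul_rpow hC.le (exp_nonneg _), mul_rpow hC.le (exp_nonneg _), ← exp_mul, ← exp_mul,
    mul_mul_mul_comm, ← rpow_add hC, add_sub_cancel, rpow_one, ← exp_add, mul_left_comm,
    ← exp_add]
  congr 2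
  linear_combination (-1 / (2 * σ ^ 2)) * hexponent

theorem renyiDivergence_multiGaussianDensity (hσ : σ ≠ 0) {α : ℝ} (hα : α ≠ 1)
    (a b : EuclideanSpace ℝ (Fin k)) :
    (α - 1)⁻¹ * log (∫ x, multiGaussianDensity k σ a x ^ α * multiGaussianDensity k σ b x ^ (1 - α))
      = α * ‖a - b‖ ^ 2 / (2 * σ ^ 2) := by
  have hα1 : α - 1 ≠ 0 := sub_ne_zero.mpr hα
  simp_rw [multiGaussianDensity_rpow_mul_rpow hσ]
  rw [integral_const_mul, integral_multiGaussianDensity hσ, mul_one, log_exp]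
  field_simp

end

theorem gaussian_mechanism_rdp_general
    (k : ℕ) (σ Δ α : ℝ) (hσ : 0 < σ) (hα : 1 < α)
    (a b : EuclideanSpace ℝ (Fin k)) (hab : ‖a - b‖ ≤ Δ) :
    (α - 1)⁻¹ *
        Real.log (∫ x : EuclideanSpace ℝ (Fin k),
          multiGaussianDensity k σ a x ^ α * multiGaussianDensity k σ b x ^ (1 - α)) ≤
      α * Δ ^ 2 / (2 * σ ^ 2) := by
  rw [renyiDivergence_multiGaussianDensity hσ.ne' hα.ne' a b]
  have hα0 : 0 ≤ α := by linarith
  gcongr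

theorem gaussian_mechanism_rdp
    (k : ℕ) (hk : 1 ≤ k) (σ Δ α : ℝ) (hσ : 0 < σ) (hΔ : 0 ≤ Δ) (hα : 1 < α)
    (a b : EuclideanSpace ℝ (Fin k)) (hab : ‖a - b‖ ≤ Δ) :
    (α - 1)⁻¹ *
        Real.log (∫ x : EuclideanSpace ℝ (Fin k),
          multiGaussianDensity k σ a x ^ α * multiGaussianDensity k σ b x ^ (1 - α)) ≤
      α * Δ ^ 2 / (2 * σ ^ 2) :=
  gaussian_mechanism_rdp_general k σ Δ α hσ hα a b hab
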